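/- On R⁷ with coordinates (t,x,y,z,p,q,r), for smooth functions f,g of (t,z), let X₁(f) = f∂_t − x f_t∂_x − x f_z∂_y + (x f_{tt} − 2p f_t)∂_p + (x f_{tz} − q f_t − p f_z)∂_q + (x f_{zz} − 2q f_z)∂_r. Then [X₁(f), X₁(g)] = X₁(f g_t − f_t g). -/

import Mathlib

/-- Partial derivative in `t` of a function of `(t,z)`. -/
noncomputable def pdt (f : ℝ × ℝ → ℝ) : ℝ × ℝ → ℝ := fun w => fderiv ℝ f w (1, 0)

/-- Partial derivative in `z` of a function of `(t,z)`. -/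
noncomputable def pdz (f : ℝ × ℝ → ℝ) : ℝ × ℝ → ℝ := fun w => fderiv ℝ f w (0, 1)

/-- Lie bracket of vector fields on `ℝ⁷`, viewed as maps `ℝ⁷ → ℝ⁷`. -/
noncomputable def vbracket (X Y : (Fin 7 → ℝ) → (Fin 7 → ℝ)) : (Fin 7 → ℝ) → (Fin 7 → ℝ) :=
  fun v => fderiv ℝ Y v (X v) - fderiv ℝ X v (Y v)

/-- Coordinates on `ℝ⁷` are `(t,x,y,z,p,q,r)`, indexed `0,…,6`.
`X₁(f) = f∂_t − x f_t∂_x − x f_z∂_y + (x f_tt − 2p f_t)∂_p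
        + (x f_tz − q f_t − p f_z)∂_q + (x f_zz − 2q f_z)∂_r`. -/
noncomputable def X1 (f : ℝ × ℝ → ℝ) : (Fin 7 → ℝ) → (Fin 7 → ℝ) :=
  fun v =>
    ![f (v 0, v 3),
      -v 1 * pdt f (v 0, v 3),
      -v 1 * pdz f (v 0, v 3),
      0,
      v 1 * pdt (pdt f) (v 0, v 3) - 2 * v 4 * pdt f (v 0, v 3),
      v 1 * pdz (pdt f) (v 0, v 3) - v 5 * pdt f (v 0, v 3) - v 4 * pdz f (v 0, v 3),
      v 1 * pdz (pdz f) (v 0, v 3) - 2 * v 5 * pdz f (v 0, v 3)]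

/-! ### Auxiliary infrastructure -/

noncomputable def prTZ : (Fin 7 → ℝ) →L[ℝ] ℝ × ℝ :=
  (ContinuousLinearMap.proj 0).prod (ContinuousLinearMap.proj 3)

lemma pdt_smooth {h : ℝ × ℝ → ℝ} (hh : ContDiff ℝ (⊤ : ℕ∞) h) : ContDiff ℝ (⊤ : ℕ∞) (pdt h) :=
  (ContinuousLinearMap.apply ℝ ℝ ((1:ℝ),(0:ℝ))).contDiff.comp (hh.fderiv_right (by simp))

lemma pdz_smooth {h : ℝ × ℝ → ℝ} (hh : ContDiff ℝ (⊤ : ℕ∞) h) : ContDiff ℝ (⊤ : ℕ∞) (pdz h) :=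
  (ContinuousLinearMap.apply ℝ ℝ ((0:ℝ),(1:ℝ))).contDiff.comp (hh.fderiv_right (by simp))

lemma pd_swap {h : ℝ × ℝ → ℝ} (hh : ContDiff ℝ (⊤ : ℕ∞) h) : pdt (pdz h) = pdz (pdt h) := by
  funext w
  have hd : DifferentiableAt ℝ (fderiv ℝ h) w :=
    ((hh.fderiv_right (m := (⊤ : ℕ∞)) (by simp)).differentiable (by simp)).differentiableAt
  have e1 : pdt (pdz h) w = fderiv ℝ (fderiv ℝ h) w (1,0) (0,1) := by
    show fderiv ℝ (fun w => fderiv ℝ h w ((0:ℝ),(1:ℝ))) w (1,0) = _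
    rw [fderiv_clm_apply hd (differentiableAt_const _)]
    simp
  have e2 : pdz (pdt h) w = fderiv ℝ (fderiv ℝ h) w (0,1) (1,0) := by
    show fderiv ℝ (fun w => fderiv ℝ h w ((1:ℝ),(0:ℝ))) w (0,1) = _
    rw [fderiv_clm_apply hd (differentiableAt_const _)]
    simp
  rw [e1, e2]
  exact ((hh.contDiffAt).isSymmSndFDerivAt (by norm_num; exact WithTop.coe_le_coe.mpr (le_top : (2:ℕ∞) ≤ ⊤))).eq _ _

section dd
variable {F G : (Fin 7 → ℝ) → ℝ} {k : ℝ × ℝ → ℝ} {v u : Fin 7 → ℝ}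

lemma diffAt_comp (hk : ContDiff ℝ (⊤ : ℕ∞) k) (v : Fin 7 → ℝ) :
    DifferentiableAt ℝ (fun v : Fin 7 → ℝ => k (v 0, v 3)) v :=
  ((hk.differentiable (by simp)).differentiableAt).comp v prTZ.differentiableAt

lemma dd_comp (hk : ContDiff ℝ (⊤ : ℕ∞) k) (v u : Fin 7 → ℝ) :
    fderiv ℝ (fun v : Fin 7 → ℝ => k (v 0, v 3)) v u
      = u 0 * pdt k (v 0, v 3) + u 3 * pdz k (v 0, v 3) := by
  have e : (fun v : Fin 7 → ℝ => k (v 0, v 3)) = k ∘ prTZ := rfl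
  rw [e, fderiv_comp v ((hk.differentiable (by simp)).differentiableAt) prTZ.differentiableAt,
    prTZ.fderiv]
  show fderiv ℝ k (prTZ v) (prTZ u) = _
  have hu : prTZ u = (u 0) • ((1:ℝ),(0:ℝ)) + (u 3) • ((0:ℝ),(1:ℝ)) := by
    simp [prTZ, Prod.ext_iff]
  rw [hu, map_add, map_smul, map_smul]
  rfl

lemma diffAt_coord (i : Fin 7) (v : Fin 7 → ℝ) :
    DifferentiableAt ℝ (fun v : Fin 7 → ℝ => v i) v :=
  (ContinuousLinearMap.proj i : (Fin 7 → ℝ) →L[ℝ] ℝ).differentiableAt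

lemma dd_coord (i : Fin 7) (v u : Fin 7 → ℝ) :
    fderiv ℝ (fun v : Fin 7 → ℝ => v i) v u = u i := by
  have e : (fun v : Fin 7 → ℝ => v i) = (ContinuousLinearMap.proj i : (Fin 7 → ℝ) →L[ℝ] ℝ) := rfl
  rw [e, ContinuousLinearMap.fderiv]
  rfl

lemma dd_sub (hF : DifferentiableAt ℝ F v) (hG : DifferentiableAt ℝ G v) (u : Fin 7 → ℝ) :
    fderiv ℝ (fun v => F v - G v) v u = fderiv ℝ F v u - fderiv ℝ G v u := by
  rw [fderiv_fun_sub hF hG]; rfl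

lemma dd_neg (F : (Fin 7 → ℝ) → ℝ) (v u : Fin 7 → ℝ) :
    fderiv ℝ (fun v => -F v) v u = -fderiv ℝ F v u := by
  rw [fderiv_fun_neg]; rfl

lemma dd_cmul (c : ℝ) (hF : DifferentiableAt ℝ F v) (u : Fin 7 → ℝ) :
    fderiv ℝ (fun v => c * F v) v u = c * fderiv ℝ F v u := by
  rw [fderiv_const_mul hF]; rfl

lemma dd_mul (hF : DifferentiableAt ℝ F v) (hG : DifferentiableAt ℝ G v) (u : Fin 7 → ℝ) :
    fderiv ℝ (fun v => F v * G v) v u = fderiv ℝ F v u * G v + F v * fderiv ℝ G v u := by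
  rw [fderiv_fun_mul hF hG]
  simp
  ring

lemma diffAt_xk (hk : ContDiff ℝ (⊤ : ℕ∞) k) (i : Fin 7) (v : Fin 7 → ℝ) :
    DifferentiableAt ℝ (fun v : Fin 7 → ℝ => v i * k (v 0, v 3)) v :=
  (diffAt_coord i v).mul (diffAt_comp hk v)

lemma dd_xk (hk : ContDiff ℝ (⊤ : ℕ∞) k) (i : Fin 7) (v u : Fin 7 → ℝ) :
    fderiv ℝ (fun v : Fin 7 → ℝ => v i * k (v 0, v 3)) v u
      = u i * k (v 0, v 3) + v i * (u 0 * pdt k (v 0, v 3) + u 3 * pdz k (v 0, v 3)) := by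
  rw [dd_mul (diffAt_coord i v) (diffAt_comp hk v), dd_coord, dd_comp hk]

lemma fderiv_pi_apply {Φ : (Fin 7 → ℝ) → (Fin 7 → ℝ)}
    (hΦ : ∀ i, DifferentiableAt ℝ (fun x => Φ x i) v) (u : Fin 7 → ℝ) (i : Fin 7) :
    fderiv ℝ Φ v u i = fderiv ℝ (fun x => Φ x i) v u := by
  rw [show Φ = fun x i => Φ x i from rfl, fderiv_pi hΦ]
  rfl

end dd

/-! ### Derivatives of the components of `X1` -/

section ddc
variable {F : ℝ × ℝ → ℝ}

lemma ddc0 (hF : ContDiff ℝ (⊤ : ℕ∞) F) (v u : Fin 7 → ℝ) :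
    fderiv ℝ (fun x : Fin 7 → ℝ => F (x 0, x 3)) v u
      = u 0 * pdt F (v 0, v 3) + u 3 * pdz F (v 0, v 3) := dd_comp hF v u

lemma ddc1 (hF : ContDiff ℝ (⊤ : ℕ∞) F) (v u : Fin 7 → ℝ) :
    fderiv ℝ (fun x : Fin 7 → ℝ => -x 1 * pdt F (x 0, x 3)) v u
      = -(u 1 * pdt F (v 0, v 3)
          + v 1 * (u 0 * pdt (pdt F) (v 0, v 3) + u 3 * pdz (pdt F) (v 0, v 3))) := by
  have e : (fun x : Fin 7 → ℝ => -x 1 * pdt F (x 0, x 3))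
      = fun x : Fin 7 → ℝ => -(x 1 * pdt F (x 0, x 3)) := by funext x; ring
  rw [e, dd_neg (fun x : Fin 7 → ℝ => x 1 * pdt F (x 0, x 3)), dd_xk (pdt_smooth hF)]

lemma ddc2 (hF : ContDiff ℝ (⊤ : ℕ∞) F) (v u : Fin 7 → ℝ) :
    fderiv ℝ (fun x : Fin 7 → ℝ => -x 1 * pdz F (x 0, x 3)) v u
      = -(u 1 * pdz F (v 0, v 3)
          + v 1 * (u 0 * pdt (pdz F) (v 0, v 3) + u 3 * pdz (pdz F) (v 0, v 3))) := by
  have e : (fun x : Fin 7 → ℝ => -x 1 * pdz F (x 0, x 3))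
      = fun x : Fin 7 → ℝ => -(x 1 * pdz F (x 0, x 3)) := by funext x; ring
  rw [e, dd_neg (fun x : Fin 7 → ℝ => x 1 * pdz F (x 0, x 3)), dd_xk (pdz_smooth hF)]

lemma ddc4 (hF : ContDiff ℝ (⊤ : ℕ∞) F) (v u : Fin 7 → ℝ) :
    fderiv ℝ (fun x : Fin 7 → ℝ =>
        x 1 * pdt (pdt F) (x 0, x 3) - 2 * x 4 * pdt F (x 0, x 3)) v u
      = (u 1 * pdt (pdt F) (v 0, v 3)
          + v 1 * (u 0 * pdt (pdt (pdt F)) (v 0, v 3) + u 3 * pdz (pdt (pdt F)) (v 0, v 3)))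
        - 2 * (u 4 * pdt F (v 0, v 3)
          + v 4 * (u 0 * pdt (pdt F) (v 0, v 3) + u 3 * pdz (pdt F) (v 0, v 3))) := by
  have e : (fun x : Fin 7 → ℝ => x 1 * pdt (pdt F) (x 0, x 3) - 2 * x 4 * pdt F (x 0, x 3))
      = fun x : Fin 7 → ℝ =>
          (x 1 * pdt (pdt F) (x 0, x 3)) - 2 * (x 4 * pdt F (x 0, x 3)) := by funext x; ring
  rw [e, dd_sub (diffAt_xk (pdt_smooth (pdt_smooth hF)) 1 v)
      ((diffAt_xk (pdt_smooth hF) 4 v).const_mul 2),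
    dd_cmul 2 (diffAt_xk (pdt_smooth hF) 4 v),
    dd_xk (pdt_smooth (pdt_smooth hF)), dd_xk (pdt_smooth hF)]

lemma ddc5 (hF : ContDiff ℝ (⊤ : ℕ∞) F) (v u : Fin 7 → ℝ) :
    fderiv ℝ (fun x : Fin 7 → ℝ =>
        x 1 * pdz (pdt F) (x 0, x 3) - x 5 * pdt F (x 0, x 3) - x 4 * pdz F (x 0, x 3)) v u
      = ((u 1 * pdz (pdt F) (v 0, v 3)
          + v 1 * (u 0 * pdt (pdz (pdt F)) (v 0, v 3) + u 3 * pdz (pdz (pdt F)) (v 0, v 3)))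
        - (u 5 * pdt F (v 0, v 3)
          + v 5 * (u 0 * pdt (pdt F) (v 0, v 3) + u 3 * pdz (pdt F) (v 0, v 3))))
        - (u 4 * pdz F (v 0, v 3)
          + v 4 * (u 0 * pdt (pdz F) (v 0, v 3) + u 3 * pdz (pdz F) (v 0, v 3))) := by
  rw [dd_sub ((diffAt_xk (pdz_smooth (pdt_smooth hF)) 1 v).fun_sub
        (diffAt_xk (pdt_smooth hF) 5 v)) (diffAt_xk (pdz_smooth hF) 4 v),
    dd_sub (diffAt_xk (pdz_smooth (pdt_smooth hF)) 1 v) (diffAt_xk (pdt_smooth hF) 5 v),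
    dd_xk (pdz_smooth (pdt_smooth hF)), dd_xk (pdt_smooth hF), dd_xk (pdz_smooth hF)]

lemma ddc6 (hF : ContDiff ℝ (⊤ : ℕ∞) F) (v u : Fin 7 → ℝ) :
    fderiv ℝ (fun x : Fin 7 → ℝ =>
        x 1 * pdz (pdz F) (x 0, x 3) - 2 * x 5 * pdz F (x 0, x 3)) v u
      = (u 1 * pdz (pdz F) (v 0, v 3)
          + v 1 * (u 0 * pdt (pdz (pdz F)) (v 0, v 3) + u 3 * pdz (pdz (pdz F)) (v 0, v 3)))
        - 2 * (u 5 * pdz F (v 0, v 3)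
          + v 5 * (u 0 * pdt (pdz F) (v 0, v 3) + u 3 * pdz (pdz F) (v 0, v 3))) := by
  have e : (fun x : Fin 7 → ℝ => x 1 * pdz (pdz F) (x 0, x 3) - 2 * x 5 * pdz F (x 0, x 3))
      = fun x : Fin 7 → ℝ =>
          (x 1 * pdz (pdz F) (x 0, x 3)) - 2 * (x 5 * pdz F (x 0, x 3)) := by funext x; ring
  rw [e, dd_sub (diffAt_xk (pdz_smooth (pdz_smooth hF)) 1 v)
      ((diffAt_xk (pdz_smooth hF) 5 v).const_mul 2),
    dd_cmul 2 (diffAt_xk (pdz_smooth hF) 5 v),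
    dd_xk (pdz_smooth (pdz_smooth hF)), dd_xk (pdz_smooth hF)]

end ddc

/-! ### Leibniz rules for `pdt`/`pdz` on the relevant shapes -/

section shapes
variable {A B F G a b c d e k l m : ℝ × ℝ → ℝ} {w : ℝ × ℝ}

lemma pdd_sub (dir : ℝ × ℝ) (hA : DifferentiableAt ℝ A w) (hB : DifferentiableAt ℝ B w) :
    fderiv ℝ (fun w => A w - B w) w dir = fderiv ℝ A w dir - fderiv ℝ B w dir := by
  rw [fderiv_fun_sub hA hB]; rfl

lemma pdd_add (dir : ℝ × ℝ) (hA : DifferentiableAt ℝ A w) (hB : DifferentiableAt ℝ B w) :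
    fderiv ℝ (fun w => A w + B w) w dir = fderiv ℝ A w dir + fderiv ℝ B w dir := by
  rw [fderiv_fun_add hA hB]; rfl

lemma pdd_mul (dir : ℝ × ℝ) (hA : DifferentiableAt ℝ A w) (hB : DifferentiableAt ℝ B w) :
    fderiv ℝ (fun w => A w * B w) w dir
      = fderiv ℝ A w dir * B w + A w * fderiv ℝ B w dir := by
  rw [fderiv_fun_mul hA hB]
  simp
  ring

lemma pdt_shape1 (hF : Differentiable ℝ F) (hA : Differentiable ℝ A)
    (hB : Differentiable ℝ B) (hG : Differentiable ℝ G) :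
    pdt (fun w => F w * A w - B w * G w)
      = fun w => (pdt F w * A w + F w * pdt A w) - (pdt B w * G w + B w * pdt G w) := by
  funext w
  show fderiv ℝ (fun w => F w * A w - B w * G w) w (1,0) = _
  rw [pdd_sub _ ((hF w).fun_mul (hA w)) ((hB w).fun_mul (hG w)), pdd_mul _ (hF w) (hA w),
    pdd_mul _ (hB w) (hG w)]
  rfl

lemma pdz_shape1 (hF : Differentiable ℝ F) (hA : Differentiable ℝ A)
    (hB : Differentiable ℝ B) (hG : Differentiable ℝ G) :
    pdz (fun w => F w * A w - B w * G w)
      = fun w => (pdz F w * A w + F w * pdz A w) - (pdz B w * G w + B w * pdz G w) := by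
  funext w
  show fderiv ℝ (fun w => F w * A w - B w * G w) w (0,1) = _
  rw [pdd_sub _ ((hF w).fun_mul (hA w)) ((hB w).fun_mul (hG w)), pdd_mul _ (hF w) (hA w),
    pdd_mul _ (hB w) (hG w)]
  rfl

lemma pdt_shape2 (ha : Differentiable ℝ a) (hb : Differentiable ℝ b)
    (hc : Differentiable ℝ c) (hd : Differentiable ℝ d)
    (he : Differentiable ℝ e) (hk : Differentiable ℝ k)
    (hl : Differentiable ℝ l) (hm : Differentiable ℝ m) :
    pdt (fun w => (a w * b w + c w * d w) - (e w * k w + l w * m w))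
      = fun w => ((pdt a w * b w + a w * pdt b w) + (pdt c w * d w + c w * pdt d w))
          - ((pdt e w * k w + e w * pdt k w) + (pdt l w * m w + l w * pdt m w)) := by
  funext w
  show fderiv ℝ (fun w => (a w * b w + c w * d w) - (e w * k w + l w * m w)) w (1,0) = _
  rw [pdd_sub _ (((ha w).fun_mul (hb w)).fun_add ((hc w).fun_mul (hd w)))
      (((he w).fun_mul (hk w)).fun_add ((hl w).fun_mul (hm w))),
    pdd_add _ ((ha w).fun_mul (hb w)) ((hc w).fun_mul (hd w)),
    pdd_add _ ((he w).fun_mul (hk w)) ((hl w).fun_mul (hm w)),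
    pdd_mul _ (ha w) (hb w), pdd_mul _ (hc w) (hd w),
    pdd_mul _ (he w) (hk w), pdd_mul _ (hl w) (hm w)]
  rfl

lemma pdz_shape2 (ha : Differentiable ℝ a) (hb : Differentiable ℝ b)
    (hc : Differentiable ℝ c) (hd : Differentiable ℝ d)
    (he : Differentiable ℝ e) (hk : Differentiable ℝ k)
    (hl : Differentiable ℝ l) (hm : Differentiable ℝ m) :
    pdz (fun w => (a w * b w + c w * d w) - (e w * k w + l w * m w))
      = fun w => ((pdz a w * b w + a w * pdz b w) + (pdz c w * d w + c w * pdz d w))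
          - ((pdz e w * k w + e w * pdz k w) + (pdz l w * m w + l w * pdz m w)) := by
  funext w
  show fderiv ℝ (fun w => (a w * b w + c w * d w) - (e w * k w + l w * m w)) w (0,1) = _
  rw [pdd_sub _ (((ha w).fun_mul (hb w)).fun_add ((hc w).fun_mul (hd w)))
      (((he w).fun_mul (hk w)).fun_add ((hl w).fun_mul (hm w))),
    pdd_add _ ((ha w).fun_mul (hb w)) ((hc w).fun_mul (hd w)),
    pdd_add _ ((he w).fun_mul (hk w)) ((hl w).fun_mul (hm w)),
    pdd_mul _ (ha w) (hb w), pdd_mul _ (hc w) (hd w),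
    pdd_mul _ (he w) (hk w), pdd_mul _ (hl w) (hm w)]
  rfl

end shapes

/-! ### Component values and differentiability of `X1` -/

section X1a
variable (F : ℝ × ℝ → ℝ) (v : Fin 7 → ℝ)

lemma X1a0 : X1 F v 0 = F (v 0, v 3) := rfl
lemma X1a1 : X1 F v 1 = -v 1 * pdt F (v 0, v 3) := rfl
lemma X1a2 : X1 F v 2 = -v 1 * pdz F (v 0, v 3) := rfl
lemma X1a3 : X1 F v 3 = 0 := rfl
lemma X1a4 : X1 F v 4 = v 1 * pdt (pdt F) (v 0, v 3) - 2 * v 4 * pdt F (v 0, v 3) := rfl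
lemma X1a5 : X1 F v 5
    = v 1 * pdz (pdt F) (v 0, v 3) - v 5 * pdt F (v 0, v 3) - v 4 * pdz F (v 0, v 3) := rfl
lemma X1a6 : X1 F v 6 = v 1 * pdz (pdz F) (v 0, v 3) - 2 * v 5 * pdz F (v 0, v 3) := rfl

end X1a

lemma X1_comp_diffAt {F : ℝ × ℝ → ℝ} (hF : ContDiff ℝ (⊤ : ℕ∞) F) (v : Fin 7 → ℝ) (i : Fin 7) :
    DifferentiableAt ℝ (fun x => X1 F x i) v := by
  fin_cases i
  · exact diffAt_comp hF v
  · exact ((diffAt_coord 1 v).neg).mul (diffAt_comp (pdt_smooth hF) v)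
  · exact ((diffAt_coord 1 v).neg).mul (diffAt_comp (pdz_smooth hF) v)
  · exact differentiableAt_const 0
  · exact (diffAt_xk (pdt_smooth (pdt_smooth hF)) 1 v).sub
      (((differentiableAt_const (2:ℝ)).mul (diffAt_coord 4 v)).mul
        (diffAt_comp (pdt_smooth hF) v))
  · exact ((diffAt_xk (pdz_smooth (pdt_smooth hF)) 1 v).sub
      (diffAt_xk (pdt_smooth hF) 5 v)).sub (diffAt_xk (pdz_smooth hF) 4 v)
  · exact (diffAt_xk (pdz_smooth (pdz_smooth hF)) 1 v).sub
      (((differentiableAt_const (2:ℝ)).mul (diffAt_coord 5 v)).mul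
        (diffAt_comp (pdz_smooth hF) v))

theorem stmt_16 (f g : ℝ × ℝ → ℝ) (hf : ContDiff ℝ (⊤ : ℕ∞) f) (hg : ContDiff ℝ (⊤ : ℕ∞) g) :
    vbracket (X1 f) (X1 g) = X1 (fun w => f w * pdt g w - pdt f w * g w) := by
  have hfd : Differentiable ℝ f := hf.differentiable (by simp)
  have hgd : Differentiable ℝ g := hg.differentiable (by simp)
  have hftd : Differentiable ℝ (pdt f) := (pdt_smooth hf).differentiable (by simp)
  have hgtd : Differentiable ℝ (pdt g) := (pdt_smooth hg).differentiable (by simp)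
  have hfzd : Differentiable ℝ (pdz f) := (pdz_smooth hf).differentiable (by simp)
  have hgzd : Differentiable ℝ (pdz g) := (pdz_smooth hg).differentiable (by simp)
  have hfttd : Differentiable ℝ (pdt (pdt f)) :=
    (pdt_smooth (pdt_smooth hf)).differentiable (by simp)
  have hgttd : Differentiable ℝ (pdt (pdt g)) :=
    (pdt_smooth (pdt_smooth hg)).differentiable (by simp)
  have hftzd : Differentiable ℝ (pdz (pdt f)) :=
    (pdz_smooth (pdt_smooth hf)).differentiable (by simp)
  have hgtzd : Differentiable ℝ (pdz (pdt g)) :=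
    (pdz_smooth (pdt_smooth hg)).differentiable (by simp)
  -- symmetry of mixed partials
  have A1f : pdt (pdz f) = pdz (pdt f) := pd_swap hf
  have A1g : pdt (pdz g) = pdz (pdt g) := pd_swap hg
  have A2f : pdt (pdz (pdt f)) = pdz (pdt (pdt f)) := pd_swap (pdt_smooth hf)
  have A2g : pdt (pdz (pdt g)) = pdz (pdt (pdt g)) := pd_swap (pdt_smooth hg)
  have A3f : pdt (pdz (pdz f)) = pdz (pdz (pdt f)) := by
    rw [pd_swap (pdz_smooth hf), A1f]
  have A3g : pdt (pdz (pdz g)) = pdz (pdz (pdt g)) := by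
    rw [pd_swap (pdz_smooth hg), A1g]
  -- derivatives of h = f * g_t - f_t * g
  have Ht : pdt (fun w => f w * pdt g w - pdt f w * g w)
      = fun w => (pdt f w * pdt g w + f w * pdt (pdt g) w)
          - (pdt (pdt f) w * g w + pdt f w * pdt g w) :=
    pdt_shape1 hfd hgtd hftd hgd
  have Hz : pdz (fun w => f w * pdt g w - pdt f w * g w)
      = fun w => (pdz f w * pdt g w + f w * pdz (pdt g) w)
          - (pdz (pdt f) w * g w + pdt f w * pdz g w) :=
    pdz_shape1 hfd hgtd hftd hgd
  have Htt : pdt (pdt (fun w => f w * pdt g w - pdt f w * g w))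
      = fun w => ((pdt (pdt f) w * pdt g w + pdt f w * pdt (pdt g) w)
            + (pdt f w * pdt (pdt g) w + f w * pdt (pdt (pdt g)) w))
          - ((pdt (pdt (pdt f)) w * g w + pdt (pdt f) w * pdt g w)
            + (pdt (pdt f) w * pdt g w + pdt f w * pdt (pdt g) w)) := by
    rw [Ht]
    exact pdt_shape2 hftd hgtd hfd hgttd hfttd hgd hftd hgtd
  have Hzt : pdz (pdt (fun w => f w * pdt g w - pdt f w * g w))
      = fun w => ((pdz (pdt f) w * pdt g w + pdt f w * pdz (pdt g) w)
            + (pdz f w * pdt (pdt g) w + f w * pdz (pdt (pdt g)) w))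
          - ((pdz (pdt (pdt f)) w * g w + pdt (pdt f) w * pdz g w)
            + (pdz (pdt f) w * pdt g w + pdt f w * pdz (pdt g) w)) := by
    rw [Ht]
    exact pdz_shape2 hftd hgtd hfd hgttd hfttd hgd hftd hgtd
  have Hzz : pdz (pdz (fun w => f w * pdt g w - pdt f w * g w))
      = fun w => ((pdz (pdz f) w * pdt g w + pdz f w * pdz (pdt g) w)
            + (pdz f w * pdz (pdt g) w + f w * pdz (pdz (pdt g)) w))
          - ((pdz (pdz (pdt f)) w * g w + pdz (pdt f) w * pdz g w)
            + (pdz (pdt f) w * pdz g w + pdt f w * pdz (pdz g) w)) := by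
    rw [Hz]
    exact pdz_shape2 hfzd hgtd hfd hgtzd hftzd hgd hftd hgzd
  funext v
  funext i
  have LHSe : vbracket (X1 f) (X1 g) v i
      = fderiv ℝ (fun x => X1 g x i) v (X1 f v)
        - fderiv ℝ (fun x => X1 f x i) v (X1 g v) := by
    show fderiv ℝ (X1 g) v (X1 f v) i - fderiv ℝ (X1 f) v (X1 g v) i = _
    rw [fderiv_pi_apply (X1_comp_diffAt hg v) _ i, fderiv_pi_apply (X1_comp_diffAt hf v) _ i]
  rw [LHSe]
  fin_cases i
  · -- component 0
    show fderiv ℝ (fun x : Fin 7 → ℝ => g (x 0, x 3)) v (X1 f v)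
        - fderiv ℝ (fun x : Fin 7 → ℝ => f (x 0, x 3)) v (X1 g v)
        = f (v 0, v 3) * pdt g (v 0, v 3) - pdt f (v 0, v 3) * g (v 0, v 3)
    rw [ddc0 hg, ddc0 hf]
    simp only [X1a0, X1a1, X1a2, X1a3, X1a4, X1a5, X1a6]
    ring
  · -- component 1
    show fderiv ℝ (fun x : Fin 7 → ℝ => -x 1 * pdt g (x 0, x 3)) v (X1 f v)
        - fderiv ℝ (fun x : Fin 7 → ℝ => -x 1 * pdt f (x 0, x 3)) v (X1 g v)
        = -v 1 * pdt (fun w => f w * pdt g w - pdt f w * g w) (v 0, v 3)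
    rw [ddc1 hg, ddc1 hf, Ht]
    simp only [X1a0, X1a1, X1a2, X1a3, X1a4, X1a5, X1a6]
    ring
  · -- component 2
    show fderiv ℝ (fun x : Fin 7 → ℝ => -x 1 * pdz g (x 0, x 3)) v (X1 f v)
        - fderiv ℝ (fun x : Fin 7 → ℝ => -x 1 * pdz f (x 0, x 3)) v (X1 g v)
        = -v 1 * pdz (fun w => f w * pdt g w - pdt f w * g w) (v 0, v 3)
    rw [ddc2 hg, ddc2 hf, Hz]
    simp only [A1f, A1g, X1a0, X1a1, X1a2, X1a3, X1a4, X1a5, X1a6]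
    ring
  · -- component 3
    show fderiv ℝ (fun _ : Fin 7 → ℝ => (0:ℝ)) v (X1 f v)
        - fderiv ℝ (fun _ : Fin 7 → ℝ => (0:ℝ)) v (X1 g v) = (0:ℝ)
    simp
  · -- component 4
    show fderiv ℝ (fun x : Fin 7 → ℝ =>
          x 1 * pdt (pdt g) (x 0, x 3) - 2 * x 4 * pdt g (x 0, x 3)) v (X1 f v)
        - fderiv ℝ (fun x : Fin 7 → ℝ =>
          x 1 * pdt (pdt f) (x 0, x 3) - 2 * x 4 * pdt f (x 0, x 3)) v (X1 g v)
        = v 1 * pdt (pdt (fun w => f w * pdt g w - pdt f w * g w)) (v 0, v 3)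
          - 2 * v 4 * pdt (fun w => f w * pdt g w - pdt f w * g w) (v 0, v 3)
    rw [ddc4 hg, ddc4 hf, Htt, Ht]
    simp only [X1a0, X1a1, X1a2, X1a3, X1a4, X1a5, X1a6]
    ring
  · -- component 5
    show fderiv ℝ (fun x : Fin 7 → ℝ =>
          x 1 * pdz (pdt g) (x 0, x 3) - x 5 * pdt g (x 0, x 3) - x 4 * pdz g (x 0, x 3)) v
            (X1 f v)
        - fderiv ℝ (fun x : Fin 7 → ℝ =>
          x 1 * pdz (pdt f) (x 0, x 3) - x 5 * pdt f (x 0, x 3) - x 4 * pdz f (x 0, x 3)) v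
            (X1 g v)
        = v 1 * pdz (pdt (fun w => f w * pdt g w - pdt f w * g w)) (v 0, v 3)
          - v 5 * pdt (fun w => f w * pdt g w - pdt f w * g w) (v 0, v 3)
          - v 4 * pdz (fun w => f w * pdt g w - pdt f w * g w) (v 0, v 3)
    rw [ddc5 hg, ddc5 hf, Hzt, Ht, Hz]
    simp only [A1f, A1g, A2f, A2g, X1a0, X1a1, X1a2, X1a3, X1a4, X1a5, X1a6]
    ring
  · -- component 6
    show fderiv ℝ (fun x : Fin 7 → ℝ =>
          x 1 * pdz (pdz g) (x 0, x 3) - 2 * x 5 * pdz g (x 0, x 3)) v (X1 f v)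
        - fderiv ℝ (fun x : Fin 7 → ℝ =>
          x 1 * pdz (pdz f) (x 0, x 3) - 2 * x 5 * pdz f (x 0, x 3)) v (X1 g v)
        = v 1 * pdz (pdz (fun w => f w * pdt g w - pdt f w * g w)) (v 0, v 3)
          - 2 * v 5 * pdz (fun w => f w * pdt g w - pdt f w * g w) (v 0, v 3)
    rw [ddc6 hg, ddc6 hf, Hzz, Hz]
    simp only [A1f, A1g, A3f, A3g, X1a0, X1a1, X1a2, X1a3, X1a4, X1a5, X1a6]
    ring
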